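/- arXiv:2201.02043 — 4 statements merged into one kernel-verified Lean document; each statement's English description precedes it below -/
import Mathlib

section
/- Let A, B, C be subspaces of a finite-dimensional Hilbert space H, with A.B the projection of A onto B. Then (A.B).C = {0} if and only if A.(C.B) = {0}. -/
noncomputable def projDot {𝕜 H : Type*} [RCLike 𝕜] [NormedAddCommGroup H]
    [InnerProductSpace 𝕜 H] [FiniteDimensional 𝕜 H]
    (A B : Submodule 𝕜 H) : Submodule 𝕜 H :=
  A.map (B.subtype.comp (Submodule.orthogonalProjection B).toLinearMap)

lemma projDot_eq_bot_iff {𝕜 H : Type*} [RCLike 𝕜] [NormedAddCommGroup H]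
    [InnerProductSpace 𝕜 H] [FiniteDimensional 𝕜 H] (A B : Submodule 𝕜 H) :
    projDot A B = ⊥ ↔ ∀ a ∈ A, a ∈ Bᗮ := by
  rw [Submodule.eq_bot_iff]
  constructor
  · intro h a ha
    rw [← Submodule.orthogonalProjectionOnto_eq_zero_iff]
    have := h (Submodule.orthogonalProjection B a) (Submodule.mem_map.mpr ⟨a, ha, rfl⟩)
    exact Subtype.ext this
  · rintro h x hx
    obtain ⟨a, ha, rfl⟩ := Submodule.mem_map.mp hx
    simp [Submodule.orthogonalProjectionOnto_eq_zero_iff.mpr (h a ha)]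

theorem stmt1 {𝕜 H : Type*} [RCLike 𝕜] [NormedAddCommGroup H]
    [InnerProductSpace 𝕜 H] [FiniteDimensional 𝕜 H] (A B C : Submodule 𝕜 H) :
    projDot (projDot A B) C = ⊥ ↔ projDot A (projDot C B) = ⊥ := by
  rw [projDot_eq_bot_iff, projDot_eq_bot_iff]
  constructor
  · intro h a ha
    rw [Submodule.mem_orthogonal]
    rintro _ hc'
    obtain ⟨c, hc, rfl⟩ := Submodule.mem_map.mp hc'
    have := h _ (Submodule.mem_map.mpr ⟨a, ha, rfl⟩)
    rw [Submodule.mem_orthogonal] at this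
    have h2 := this c hc
    simp only [LinearMap.comp_apply, Submodule.subtype_apply, ContinuousLinearMap.coe_coe] at h2
    simpa using (Submodule.inner_starProjection_left_eq_right B c a).trans h2
  · intro h x hx
    rcases Submodule.mem_map.mp hx with ⟨a, ha, rfl⟩
    rw [Submodule.mem_orthogonal]
    intro c hc
    have := (h a ha)
    rw [Submodule.mem_orthogonal] at this
    have h2 := this _ (Submodule.mem_map.mpr ⟨c, hc, rfl⟩)
    simp only [LinearMap.comp_apply, Submodule.subtype_apply, ContinuousLinearMap.coe_coe] at h2
    simpa using (Submodule.inner_starProjection_left_eq_right B c a).symm.trans h2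
end

section
/- In a Q-structure, for any subsets A, B of P one has (A.B)⊥ ⊆ (A⊥⊥.B)⊥. -/
structure QStructure (P : Type*) where
  Z : Set P
  mul : P → P → P
  one : P
  mem_symm : ∀ x y, mul x y ∈ Z ↔ mul y x ∈ Z
  mem_rev : ∀ x y z, mul (mul x y) z ∈ Z ↔ mul x (mul z y) ∈ Z
  one_mul : ∀ x, mul one x = x
  mul_one : ∀ x, mul x one = x

namespace QStructure

variable {P : Type*} (Q : QStructure P)

def perp (A : Set P) : Set P := {b | ∀ a ∈ A, Q.mul b a ∈ Q.Z}

def sdot (A B : Set P) : Set P := {c | ∃ a ∈ A, ∃ b ∈ B, c = Q.mul a b}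

def IsFact (F : Set P) : Prop := F = Q.perp (Q.perp F)

def tensor (A B : Set P) : Set P := Q.perp (Q.perp (Q.sdot A B))

def parr (A B : Set P) : Set P := Q.perp (Q.sdot (Q.perp A) (Q.perp B))

def limp (A B : Set P) : Set P := Q.perp (Q.sdot A (Q.perp B))

def Projective : Prop := ∀ x ∈ Q.Z, ∀ y : P, Q.mul x y ∈ Q.Z

end QStructure

open QStructure

variable {P : Type*}

theorem stmt7 (Q : QStructure P) (A B : Set P) :
    Q.perp (Q.sdot A B) ⊆ Q.perp (Q.sdot (Q.perp (Q.perp A)) B) := by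
  intro x hx c hc
  obtain ⟨a, ha, b, hb, rfl⟩ := hc
  rw [(Q.mem_rev x b a).symm, Q.mem_symm]
  apply ha
  intro a' ha'
  rw [Q.mem_rev]
  exact hx _ ⟨a', ha', b, hb, rfl⟩
end

section
/- In a Q-structure, for any facts F, G, H one has (F ⊗ G) ⊗ H = ((F.G).H)⊥⊥. -/
open QStructure

variable {P : Type*}

lemma perp_sdot_biperp (Q : QStructure P) (A B : Set P) :
    Q.perp (Q.sdot (Q.perp (Q.perp A)) B) = Q.perp (Q.sdot A B) := by
  ext x
  constructor
  · intro hx c hc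
    obtain ⟨a, ha, b, hb, rfl⟩ := hc
    exact hx _ ⟨a, fun d hd => (Q.mem_symm a d).mpr (hd a ha), b, hb, rfl⟩
  · intro hx c hc
    obtain ⟨a', ha', b, hb, rfl⟩ := hc
    rw [Q.mem_symm, Q.mem_rev]
    exact ha' _ (fun a ha => (Q.mem_rev x b a).mpr (hx _ ⟨a, ha, b, hb, rfl⟩))

theorem stmt8 (Q : QStructure P) (F G H : Set P)
    (hF : Q.IsFact F) (hG : Q.IsFact G) (hH : Q.IsFact H) :
    Q.tensor (Q.tensor F G) H = Q.perp (Q.perp (Q.sdot (Q.sdot F G) H)) := by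
  unfold QStructure.tensor
  rw [perp_sdot_biperp]
end

section
/- In a projective Q-structure, for any facts A, B: if Z⊥ ⊆ A then Z⊥ ⊆ A ⅋ B (right weakening is sound). -/
open QStructure

variable {P : Type*}

theorem stmt19 (Q : QStructure P) (hProj : Q.Projective) (A B : Set P)
    (hA : Q.IsFact A) (hB : Q.IsFact B) (h : Q.perp Q.Z ⊆ A) :
    Q.perp Q.Z ⊆ Q.parr A B := by
  intro x hx c hc
  obtain ⟨a, ha, b, hb, rfl⟩ := hc
  have h1 : Q.one ∈ Q.perp Q.Z := by
    intro z hz; rw [Q.one_mul]; exact hz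
  have haZ : a ∈ Q.Z := by
    have := ha Q.one (h h1)
    rwa [Q.mul_one] at this
  have : Q.mul (Q.mul x b) a ∈ Q.Z := by
    rw [Q.mem_symm]; exact hProj a haZ _
  rwa [Q.mem_rev] at this
end
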